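/- Let E be a real inner product space, let u, u₁, …, uₙ be elements of E, and let σ > 0. Let K be the n×n real matrix with entries K i j = ⟪uᵢ, uⱼ⟫, let κ ∈ ℝⁿ have entries κ i = ⟪uᵢ, u⟫, let w = (K + σ²·I)⁻¹ κ, and set σ*² = ⟪u, u⟫ − κᵀ (K + σ²·I)⁻¹ κ. Let f ∈ E and B ≥ 1 with ‖f‖ ≤ B. Then ((∑ᵢ wᵢ ⟪f, uᵢ⟫) − ⟪f, u⟫)² + σ² ∑ᵢ wᵢ² ≤ B² σ*². -/

import Mathlib

open Matrix
open scoped RealInnerProductSpace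

/-!
Since `w` solves `(K + σ² I) w = κ`, expanding the square shows that the posterior variance is
`σ*² = ‖∑ wᵢ uᵢ - u‖² + σ² ‖w‖²`, while the error is `⟪f, ∑ wᵢ uᵢ - u⟫`. Cauchy–Schwarz bounds
the error squared by `B² ‖∑ wᵢ uᵢ - u‖²`, and `B ≥ 1` takes care of the penalty term.
-/

namespace Matrix

variable {ι E : Type*} [Fintype ι] [NormedAddCommGroup E] [InnerProductSpace ℝ E]

lemma dotProduct_gram_mulVec_self (v : ι → E) (x : ι → ℝ) :
    x ⬝ᵥ (gram ℝ v *ᵥ x) = ‖∑ i, x i • v i‖ ^ 2 := by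
  simpa only [star_trivial, real_inner_self_eq_norm_sq] using
    star_dotProduct_gram_mulVec (𝕜 := ℝ) v x x

lemma posDef_gram_add_smul_one [DecidableEq ι] (v : ι → E) {c : ℝ} (hc : 0 < c) :
    (gram ℝ v + c • 1).PosDef :=
  PosDef.posSemidef_add (posSemidef_gram ℝ v) (PosDef.one.smul hc)

theorem inner_self_sub_dotProduct_eq_norm_sub_sq_add [DecidableEq ι]
    (v : ι → E) (u : E) (c : ℝ) {w : ι → ℝ}
    (hw : (gram ℝ v + c • 1) *ᵥ w = fun i => ⟪v i, u⟫) :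
    ⟪u, u⟫ - (fun i => ⟪v i, u⟫) ⬝ᵥ w = ‖∑ i, w i • v i - u‖ ^ 2 + c * ∑ i, w i ^ 2 := by
  have hcross : ⟪∑ i, w i • v i, u⟫ = w ⬝ᵥ fun i => ⟪v i, u⟫ := by
    simp only [sum_inner, real_inner_smul_left, dotProduct]
  have hquad : w ⬝ᵥ ((gram ℝ v + c • 1) *ᵥ w) = ‖∑ i, w i • v i‖ ^ 2 + c * ∑ i, w i ^ 2 := by
    rw [add_mulVec, dotProduct_add, dotProduct_gram_mulVec_self, smul_mulVec, one_mulVec,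
      dotProduct_smul, smul_eq_mul]
    simp only [dotProduct, sq]
  rw [hw] at hquad
  rw [norm_sub_sq_real, real_inner_self_eq_norm_sq, hcross, dotProduct_comm]
  linarith

end Matrix

lemma sq_inner_add_le_sq_mul_norm_sq_add {E : Type*} [NormedAddCommGroup E]
    [InnerProductSpace ℝ E] {f v : E} {B r : ℝ} (hB : 1 ≤ B) (hf : ‖f‖ ≤ B) (hr : 0 ≤ r) :
    ⟪f, v⟫ ^ 2 + r ≤ B ^ 2 * (‖v‖ ^ 2 + r) := by
  have hcs : ⟪f, v⟫ ^ 2 ≤ B ^ 2 * ‖v‖ ^ 2 :=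
    calc ⟪f, v⟫ ^ 2 = |⟪f, v⟫| ^ 2 := (sq_abs _).symm
      _ ≤ (‖f‖ * ‖v‖) ^ 2 := pow_le_pow_left₀ (abs_nonneg _) (abs_real_inner_le_norm f v) 2
      _ ≤ (B * ‖v‖) ^ 2 := by gcongr
      _ = B ^ 2 * ‖v‖ ^ 2 := mul_pow _ _ _
  have hpenalty : r ≤ B ^ 2 * r := le_mul_of_one_le_left hr (one_le_pow₀ hB)
  linarith

theorem stmt_1 {E : Type*} [NormedAddCommGroup E] [InnerProductSpace ℝ E]
    {n : ℕ} (u : E) (u' : Fin n → E) (σ : ℝ) (hσ : 0 < σ)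
    (K : Matrix (Fin n) (Fin n) ℝ) (hK : ∀ i j, K i j = ⟪u' i, u' j⟫)
    (κ : Fin n → ℝ) (hκ : ∀ i, κ i = ⟪u' i, u⟫)
    (w : Fin n → ℝ)
    (hw : w = (K + σ ^ 2 • (1 : Matrix (Fin n) (Fin n) ℝ))⁻¹ *ᵥ κ)
    (σstarSq : ℝ)
    (hσstar : σstarSq =
      ⟪u, u⟫ - κ ⬝ᵥ ((K + σ ^ 2 • (1 : Matrix (Fin n) (Fin n) ℝ))⁻¹ *ᵥ κ))
    (f : E) (B : ℝ) (hB : 1 ≤ B) (hf : ‖f‖ ≤ B) :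
    ((∑ i, w i * ⟪f, u' i⟫) - ⟪f, u⟫) ^ 2 + σ ^ 2 * ∑ i, w i ^ 2 ≤
      B ^ 2 * σstarSq := by
  obtain rfl : K = gram ℝ u' := Matrix.ext hK
  obtain rfl : κ = fun i => ⟪u' i, u⟫ := funext hκ
  have hA : (gram ℝ u' + σ ^ 2 • 1).PosDef := posDef_gram_add_smul_one u' (pow_pos hσ 2)
  have hsolve : (gram ℝ u' + σ ^ 2 • 1) *ᵥ w = fun i => ⟪u' i, u⟫ := by
    rw [hw, mulVec_mulVec, mul_nonsing_inv _ ((isUnit_iff_isUnit_det _).mp hA.isUnit),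
      one_mulVec]
  have herror : (∑ i, w i * ⟪f, u' i⟫) - ⟪f, u⟫ = ⟪f, ∑ i, w i • u' i - u⟫ := by
    simp only [inner_sub_right, inner_sum, real_inner_smul_right]
  rw [hσstar, ← hw, inner_self_sub_dotProduct_eq_norm_sub_sq_add u' u _ hsolve, herror]
  exact sq_inner_add_le_sq_mul_norm_sq_add hB hf (by positivity)
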